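/- In the polynomial ring k[z_{(l,w)} : l ∈ L, w ∈ M(ℕ^{d+1})] with derivations D^{(n)} sending z_{(l,w)} to z_{(l, n·w)} (up to the multiplicity factor w(n)+1), the products z^β ▷_n z^{β'} := z^β · D^{(n)}(z^{β'}) make the span of populated monomials (those with Σ_{(l,w)} (1−|w|)β(l,w) = 1, where |w| = Σ_n w(n)) into a multi-Novikov algebra; in particular closure holds: z^β ▷_n z^{β'} is a combination of populated monomials whenever β, β' are populated. -/
import Mathlib


/-- The polynomial ring `k[z_{(l,w)}]`, variables indexed by `l ∈ L` and a
commutative monomial `w` in letters `n ∈ ℕ^{d+1}`. -/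
abbrev GenPolyRing (k L : Type*) [CommSemiring k] (d : ℕ) : Type _ :=
  MvPolynomial (L × ((Fin (d + 1) → ℕ) →₀ ℕ)) k

/-- A general multi-index `β` is populated if `Σ_{(l,w)} (1 − |w|)·β(l,w) = 1`,
where `|w| = Σ_n w(n)`. -/
def PopulatedGen {L : Type*} (d : ℕ)
    (β : (L × ((Fin (d + 1) → ℕ) →₀ ℕ)) →₀ ℕ) : Prop :=
  (∑ p ∈ β.support, (1 - ((p.2.sum fun _ m => m : ℕ) : ℤ)) * (β p : ℤ)) = 1

/-- The weight `1 - |w|` of a variable index `p = (l, w)`. -/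
def cWt {L : Type*} (d : ℕ) (p : L × ((Fin (d + 1) → ℕ) →₀ ℕ)) : ℤ :=
  1 - ((p.2.sum fun _ m => m : ℕ) : ℤ)

/-- The total weight of a multi-index `β`. -/
def SWt {L : Type*} (d : ℕ) (β : (L × ((Fin (d + 1) → ℕ) →₀ ℕ)) →₀ ℕ) : ℤ :=
  β.sum fun p m => cWt d p * (m : ℤ)

lemma popGen_iff {L : Type*} {d : ℕ} (β : (L × ((Fin (d + 1) → ℕ) →₀ ℕ)) →₀ ℕ) :
    PopulatedGen d β ↔ SWt d β = 1 := by
  unfold PopulatedGen SWt Finsupp.sum cWt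
  exact Iff.rfl

lemma SWt_add {L : Type*} {d : ℕ} (β γ : (L × ((Fin (d + 1) → ℕ) →₀ ℕ)) →₀ ℕ) :
    SWt d (β + γ) = SWt d β + SWt d γ := by
  unfold SWt
  rw [Finsupp.sum_add_index'] <;> intros <;> push_cast <;> ring

lemma SWt_single {L : Type*} {d : ℕ} (p : L × ((Fin (d + 1) → ℕ) →₀ ℕ)) :
    SWt d (Finsupp.single p 1) = cWt d p := by
  unfold SWt
  rw [Finsupp.sum_single_index] <;> simp

/-- Closure of populated general multi-indices under the products
`z^β ▷_n z^{β'} = z^β·D^{(n)}(z^{β'})`, where `D^{(n)}` is the derivation with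
`D^{(n)}(z_{(l,w)}) = (w(n)+1)·z_{(l, n·w)}`. -/
theorem stmt_19 {k L : Type*} [Field k] [Finite L] (d : ℕ)
    (D : (Fin (d + 1) → ℕ) →
      Derivation k (GenPolyRing k L d) (GenPolyRing k L d))
    (hD : ∀ (n : Fin (d + 1) → ℕ) (l : L) (w : (Fin (d + 1) → ℕ) →₀ ℕ),
      D n (MvPolynomial.X (l, w))
        = ((w n + 1 : ℕ) : GenPolyRing k L d)
            * MvPolynomial.X (l, w + Finsupp.single n 1)) :
    ∀ (n : Fin (d + 1) → ℕ) (β β' : (L × ((Fin (d + 1) → ℕ) →₀ ℕ)) →₀ ℕ),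
      PopulatedGen d β → PopulatedGen d β' →
        (MvPolynomial.monomial β (1 : k)) * D n (MvPolynomial.monomial β' (1 : k)) ∈
          Submodule.span k
            {q : GenPolyRing k L d |
              ∃ δ, PopulatedGen d δ ∧ q = MvPolynomial.monomial δ 1} := by
  intro n β β' hβ hβ'
  have hDn : D n = MvPolynomial.mkDerivation k
      (fun p : L × ((Fin (d + 1) → ℕ) →₀ ℕ) =>
        ((p.2 n + 1 : ℕ) : GenPolyRing k L d)
          * MvPolynomial.X (p.1, p.2 + Finsupp.single n 1)) := by
    apply MvPolynomial.derivation_ext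
    intro p
    rw [MvPolynomial.mkDerivation_X, hD n p.1 p.2]
  rw [hDn, MvPolynomial.mkDerivation_monomial, one_smul, Finsupp.sum, Finset.mul_sum]
  apply Submodule.sum_mem
  intro p hp
  set q : L × ((Fin (d + 1) → ℕ) →₀ ℕ) := (p.1, p.2 + Finsupp.single n 1) with hq
  set δ : (L × ((Fin (d + 1) → ℕ) →₀ ℕ)) →₀ ℕ :=
    β + (β' - Finsupp.single p 1) + Finsupp.single q 1 with hδ
  have hle : Finsupp.single p 1 ≤ β' := by
    rw [Finsupp.single_le_iff]
    exact Nat.one_le_iff_ne_zero.mpr (Finsupp.mem_support_iff.mp hp)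
  have hsplit : β' - Finsupp.single p 1 + Finsupp.single p 1 = β' :=
    tsub_add_cancel_of_le hle
  have hcq : cWt d q = cWt d p - 1 := by
    unfold cWt
    rw [hq]
    simp only
    rw [Finsupp.sum_add_index' (by simp) (fun _ a b => rfl),
      Finsupp.sum_single_index rfl]
    push_cast; ring
  have hpop : PopulatedGen d δ := by
    rw [popGen_iff] at hβ hβ' ⊢
    have h1 : SWt d (β' - Finsupp.single p 1) + cWt d p = 1 := by
      rw [← SWt_single (d := d) p, ← SWt_add, hsplit, hβ']
    rw [hδ, SWt_add, SWt_add, SWt_single, hcq, hβ]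
    omega
  have key : MvPolynomial.monomial β (1 : k) *
      (MvPolynomial.monomial (β' - Finsupp.single p 1) ((β' p : k)) •
        (((p.2 n + 1 : ℕ) : GenPolyRing k L d)
          * MvPolynomial.X (p.1, p.2 + Finsupp.single n 1)))
      = ((β' p * (p.2 n + 1) : ℕ) : k) • MvPolynomial.monomial δ 1 := by
    rw [smul_eq_mul, MvPolynomial.X, hδ,
      show ((p.2 n + 1 : ℕ) : GenPolyRing k L d)
        = MvPolynomial.C ((p.2 n + 1 : ℕ) : k) from (map_natCast MvPolynomial.C _).symm]
    rw [MvPolynomial.C_mul_monomial, MvPolynomial.monomial_mul, MvPolynomial.monomial_mul,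
      MvPolynomial.smul_monomial, smul_eq_mul, mul_one, ← add_assoc, ← hq]
    push_cast
    ring_nf
  rw [key]
  exact Submodule.smul_mem _ _ (Submodule.subset_span ⟨δ, hpop, rfl⟩)
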